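/- Let w ≥ 3, assume a_{w-1} = 1, and let 1 ≤ s ≤ w−2 and 0 ≤ t ≤ w−2. Then every column of B^s·C·B^t other than the (t+2)-nd column (1-indexed) is zero, and the (t+2)-nd column has its entries in rows 1 through w−s equal to 0 and its entry in row w−s+1 equal to 1. -/

import Mathlib

open Matrix

/-- The matrix `B` of MT-type recursions: first row zero, row `i` (0-indexed,
`1 ≤ i ≤ w-2`) is the standard basis row vector with a `1` in column `i+1`,
and the last row is `(a_{w-1}, …, a_0)` (stored as `a 0, …, a (w-1)`). -/
def mtB (w : ℕ) (a : Fin w → ZMod 2) : Matrix (Fin w) (Fin w) (ZMod 2) :=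
  Matrix.of fun i j =>
    if (i : ℕ) = w - 1 then a j
    else if 1 ≤ (i : ℕ) ∧ (j : ℕ) = (i : ℕ) + 1 then 1 else 0

/-- The matrix `C`: its only nonzero entry is a `1` in position `(1,2)` (1-indexed). -/
def mtC (w : ℕ) : Matrix (Fin w) (Fin w) (ZMod 2) :=
  Matrix.of fun i j => if (i : ℕ) = 0 ∧ (j : ℕ) = 1 then 1 else 0

/-- `Q_k = Σ_{i=0}^{k-1} B^i · C · B^{k-1-i}`. -/
def mtQ (w : ℕ) (a : Fin w → ZMod 2) (k : ℕ) : Matrix (Fin w) (Fin w) (ZMod 2) :=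
  ∑ i ∈ Finset.range k, (mtB w a) ^ i * mtC w * (mtB w a) ^ (k - 1 - i)

/-!
Indices are 0-based below. `C` is the matrix unit `E₀₁`, so `B^s C B^t` is the outer product of
column `0` of `B^s` with row `1` of `B^t`. For `1 ≤ i ≤ w - 2` row `i` of `B` is `e_{i+1}`, so
left multiplication by `B` shifts those rows up by one, while row `0` of `B` is zero. Hence row
`1` of `B^t` is `e_{t+1}`, column `0` of `B^s` vanishes above row `w - s`, and row `w - s` of
`B^s` is the last row `(a_{w-1}, …, a_0)` of `B`, whose first entry is `a_{w-1} = 1`.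
-/

lemma Matrix.mul_single_mul_apply {l m n o R : Type*} [Fintype m] [Fintype n] [DecidableEq m]
    [DecidableEq n] [NonUnitalNonAssocSemiring R] (M : Matrix l m R) (N : Matrix n o R)
    (k : m) (k' : n) (c : R) (i : l) (j : o) :
    (M * Matrix.single k k' c * N) i j = M i k * c * N k' j := by
  simp [Matrix.mul_apply, Matrix.single_apply, ite_and]

section

variable {w : ℕ} (a : Fin w → ZMod 2)

lemma mtC_eq_single (hw : 2 ≤ w) : mtC w = Matrix.single ⟨0, by omega⟩ ⟨1, by omega⟩ 1 := by
  ext i j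
  simp [mtC, Matrix.single_apply, Fin.ext_iff, eq_comm]

lemma mtB_mul_apply_of_pos (M : Matrix (Fin w) (Fin w) (ZMod 2)) {i : Fin w}
    (hi1 : 1 ≤ (i : ℕ)) (hi : (i : ℕ) + 1 < w) (j : Fin w) :
    (mtB w a * M) i j = M ⟨i + 1, hi⟩ j := by
  rw [Matrix.mul_apply, Finset.sum_eq_single ⟨i + 1, hi⟩]
  · simp [mtB, hi1, show (i : ℕ) ≠ w - 1 by omega]
  · intro k _ hk
    simp [mtB, show (i : ℕ) ≠ w - 1 by omega, show (k : ℕ) ≠ i + 1 from fun h => hk (Fin.ext h)]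
  · simp

lemma mtB_mul_apply_zero (hw : 2 ≤ w) (M : Matrix (Fin w) (Fin w) (ZMod 2)) {i : Fin w}
    (hi : (i : ℕ) = 0) (j : Fin w) : (mtB w a * M) i j = 0 := by
  simp [Matrix.mul_apply, mtB, hi, show 0 ≠ w - 1 by omega]

lemma mtB_pow_mul_apply (M : Matrix (Fin w) (Fin w) (ZMod 2)) (k : ℕ) {i : Fin w}
    (hi1 : 1 ≤ (i : ℕ)) (hik : (i : ℕ) + k < w) (j : Fin w) :
    (mtB w a ^ k * M) i j = M ⟨i + k, hik⟩ j := by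
  induction k generalizing i with
  | zero => simp
  | succ k ih =>
    rw [pow_succ', Matrix.mul_assoc, mtB_mul_apply_of_pos a _ hi1 (by omega),
      ih (by simp) (by simp; omega)]
    simp only [Nat.add_right_comm, Nat.add_assoc]

lemma mtB_pow_apply (k : ℕ) {i : Fin w} (hi1 : 1 ≤ (i : ℕ)) (hik : (i : ℕ) + k < w) (j : Fin w) :
    (mtB w a ^ k) i j = if (j : ℕ) = i + k then 1 else 0 := by
  simpa [Matrix.one_apply, Fin.ext_iff, eq_comm] using mtB_pow_mul_apply a 1 k hi1 hik j

lemma mtB_pow_apply_eq_zero {s : ℕ} (hs : 1 ≤ s) {i j : Fin w} (his : (i : ℕ) + s < w)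
    (hj : (j : ℕ) < i + s) : (mtB w a ^ s) i j = 0 := by
  obtain ⟨k, rfl⟩ : ∃ k, s = k + 1 := ⟨s - 1, by omega⟩
  rcases Nat.eq_zero_or_pos (i : ℕ) with hi | hi
  · rw [pow_succ', mtB_mul_apply_zero a (by omega) _ hi]
  · rw [mtB_pow_apply a _ hi his, if_neg (by omega)]

lemma mtB_pow_apply_sub {s : ℕ} (hs1 : 1 ≤ s) (hs : s < w) (j : Fin w) :
    (mtB w a ^ s) ⟨w - s, by omega⟩ j = a j := by
  obtain ⟨k, rfl⟩ : ∃ k, s = k + 1 := ⟨s - 1, by omega⟩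
  rw [pow_succ, mtB_pow_mul_apply a _ k (by simp; omega) (by simp; omega)]
  simp [mtB, show w - (k + 1) + k = w - 1 by omega]

end

theorem stmt5 (w : ℕ) (hw : 3 ≤ w) (a : Fin w → ZMod 2) (ha : a ⟨0, by omega⟩ = 1)
    (s t : ℕ) (hs1 : 1 ≤ s) (hs : s ≤ w - 2) (ht : t ≤ w - 2) :
    (∀ i j : Fin w, (j : ℕ) ≠ t + 1 →
      ((mtB w a) ^ s * mtC w * (mtB w a) ^ t) i j = 0) ∧
    (∀ i : Fin w, (i : ℕ) < w - s →
      ((mtB w a) ^ s * mtC w * (mtB w a) ^ t) i ⟨t + 1, by omega⟩ = 0) ∧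
    ((mtB w a) ^ s * mtC w * (mtB w a) ^ t) ⟨w - s, by omega⟩ ⟨t + 1, by omega⟩ = 1 := by
  have entry : ∀ i j : Fin w, ((mtB w a) ^ s * mtC w * (mtB w a) ^ t) i j =
      ((mtB w a) ^ s) i ⟨0, by omega⟩ * if (j : ℕ) = t + 1 then 1 else 0 := by
    intro i j
    rw [mtC_eq_single (by omega), Matrix.mul_single_mul_apply, mul_one,
      mtB_pow_apply a t (i := ⟨1, by omega⟩) le_rfl (by simp; omega), add_comm 1 t]
  refine ⟨fun i j hj => ?_, fun i hi => ?_, ?_⟩ <;> rw [entry]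
  · rw [if_neg hj, mul_zero]
  · rw [mtB_pow_apply_eq_zero a hs1 (by omega) (by simp; omega), zero_mul]
  · rw [mtB_pow_apply_sub a hs1 (by omega), ha]
    simp
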